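/- Let u, v: [-π,π] → ℝ be integrable, and for 0 ≤ θ ≤ π define u*(θ) = sup_{|E|=2θ} ∫_E u dt and similarly v*. If u*(θ) ≤ v*(θ) for all θ ∈ [0,π], then for every convex increasing function Φ: ℝ → ℝ, ∫_{-π}^{π} Φ(u(t)) dt ≤ ∫_{-π}^{π} Φ(v(t)) dt. -/

import Mathlib

/-!
For every `s`, `∫ (w - s)⁺ = sup_E (∫_E w - s |E|)`, the supremum being attained at the
superlevel set `{w > s}`; sorting the sets `E` by their measure `2θ` bounds it by
`sup_θ (w*(θ) - 2θ s)`, with equality. So `u* ≤ v*` gives `∫ (u - s)⁺ ≤ ∫ (v - s)⁺` for every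
`s`, hence `∫ K(u) ≤ ∫ K(v)` for every `K = c + ∑ wᵢ (x - pᵢ)⁺` with `wᵢ ≥ 0`.
For fixed `c`, `Φ (max x c)` is the pointwise limit of such polygons lying between `Φ c` and
itself (they follow tangent lines of `Φ` on a grid starting at `c`), so dominated convergence
gives `∫ Φ(max(u, c)) ≤ ∫ Φ(max(v, c))`; finally let `c → -∞`.
-/

open MeasureTheory Set
open scoped Real

noncomputable def starFn (g : ℝ → ℝ) (θ : ℝ) : ℝ :=
  sSup ((fun E => ∫ t in E, g t) ''
    {E : Set ℝ | MeasurableSet E ∧ E ⊆ Icc (-π) π ∧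
      volume E = ENNReal.ofReal (2 * θ)})

open Filter
open scoped Topology

lemma ConvexOn.add_rightDeriv_mul_sub_le {Φ : ℝ → ℝ} (hΦ : ConvexOn ℝ univ Φ) (x y : ℝ) :
    Φ x + derivWithin Φ (Ioi x) x * (y - x) ≤ Φ y := by
  have hx : x ∈ interior univ := by simp
  rcases lt_trichotomy y x with hyx | rfl | hxy
  · have h := (hΦ.slope_le_leftDeriv_of_mem_interior (mem_univ y) hx hyx).trans
      (hΦ.leftDeriv_le_rightDeriv_of_mem_interior hx)
    rw [slope_def_field, div_le_iff₀ (sub_pos.2 hyx)] at h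
    linarith
  · simp
  · have h := hΦ.rightDeriv_le_slope_of_mem_interior hx (mem_univ y) hxy
    rw [slope_def_field, le_div_iff₀ (sub_pos.2 hxy)] at h
    linarith

lemma add_sub_apply_min_eq_apply_max {α β : Type*} [LinearOrder α] [AddCommGroup β]
    (f : α → β) (x a : α) : f a + f x - f (min x a) = f (max x a) := by
  rcases le_total x a with h | h <;> simp [h]

section Subgradient

variable {Φ φ : ℝ → ℝ} (hφ : ∀ x y, Φ x + φ x * (y - x) ≤ Φ y)
include hφ

lemma monotone_of_forall_add_mul_sub_le : Monotone φ := by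
  intro x y hxy
  rcases hxy.eq_or_lt with rfl | hxy
  · rfl
  have h₁ := hφ x y
  have h₂ := hφ y x
  nlinarith

lemma nonneg_of_forall_add_mul_sub_le (hΦ : Monotone Φ) (x : ℝ) : 0 ≤ φ x := by
  have h₁ := hφ x (x - 1)
  have h₂ := hΦ (sub_le_self x zero_le_one)
  linarith

lemma mul_sub_min_le_sub (p z : ℝ) : φ p * (z - min z p) ≤ Φ z - Φ (min z p) := by
  rcases le_total z p with hzp | hpz
  · simp [min_eq_left hzp]
  · rw [min_eq_right hpz]
    linarith [hφ p z]

lemma sub_le_mul_sub_min_add {p q Δ : ℝ} (hpq : p ≤ q) (hqΔ : q ≤ p + Δ) (x : ℝ) :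
    Φ (min x q) - Φ (min x p) ≤
      φ p * (min x q - min x p) + Δ * (φ (min x q) - φ (min x p)) := by
  rcases le_total x p with hxp | hpx
  · simp [min_eq_left hxp, min_eq_left (hxp.trans hpq)]
  rw [min_eq_right hpx]
  set y := min x q
  have hpy : p ≤ y := le_min hpx hpq
  have hyq : y - p ≤ Δ := by linarith [min_le_right x q]
  have hφpy := monotone_of_forall_add_mul_sub_le hφ hpy
  have := hφ y p
  nlinarith [mul_le_mul_of_nonneg_left hyq (sub_nonneg.2 hφpy)]

end Subgradient

def hingeWeight (φ : ℝ → ℝ) (p : ℕ → ℝ) : ℕ → ℝ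
  | 0 => φ (p 0)
  | i + 1 => φ (p (i + 1)) - φ (p i)

/-- The polygon equal to `Φ (p 0)` left of `p 0`, with slope `φ (p i)` on `[p i, p (i + 1)]`
and slope `φ (p m)` beyond `p m`: its slope jumps are the weights `hingeWeight φ p i`. -/
def polygonalMinorant (Φ φ : ℝ → ℝ) (p : ℕ → ℝ) (m : ℕ) (x : ℝ) : ℝ :=
  Φ (p 0) + ∑ i ∈ Finset.range (m + 1), hingeWeight φ p i * max (x - p i) 0

lemma hingeWeight_nonneg {φ : ℝ → ℝ} {p : ℕ → ℝ} (hφ : Monotone φ) (hφ₀ : ∀ x, 0 ≤ φ x)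
    (hp : Monotone p) (i : ℕ) : 0 ≤ hingeWeight φ p i := by
  cases i with
  | zero => exact hφ₀ _
  | succ i => exact sub_nonneg.2 (hφ (hp i.le_succ))

lemma polygonalMinorant_eq_sum_mul_sub_min (Φ φ : ℝ → ℝ) (p : ℕ → ℝ) (m : ℕ) (x : ℝ) :
    polygonalMinorant Φ φ p m x = Φ (p 0) +
      ∑ i ∈ Finset.range m, φ (p i) * (min x (p (i + 1)) - min x (p i)) +
        φ (p m) * (x - min x (p m)) := by
  have hinge : ∀ a, max (x - a) 0 = x - min x a := fun a => by
    rcases le_total x a with h | h <;> simp [h]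
  simp only [polygonalMinorant, hinge]
  induction m with
  | zero => simp [hingeWeight]
  | succ m ih =>
    rw [Finset.sum_range_succ, ← add_assoc, ih, Finset.sum_range_succ]
    simp only [hingeWeight]
    ring

section Minorant

variable {Φ φ : ℝ → ℝ} (hφ : ∀ x y, Φ x + φ x * (y - x) ≤ Φ y) {p : ℕ → ℝ} (hp : Monotone p)
include hφ hp

lemma polygonalMinorant_le (m : ℕ) (x : ℝ) : polygonalMinorant Φ φ p m x ≤ Φ (max x (p 0)) := by
  have hcell : ∀ i ∈ Finset.range m, φ (p i) * (min x (p (i + 1)) - min x (p i)) ≤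
      Φ (min x (p (i + 1))) - Φ (min x (p i)) := fun i _ => by
    simpa [min_assoc, min_eq_right (hp i.le_succ)] using
      mul_sub_min_le_sub hφ (p i) (min x (p (i + 1)))
  have hsum := Finset.sum_le_sum hcell
  rw [Finset.sum_range_sub (fun i => Φ (min x (p i)))] at hsum
  rw [polygonalMinorant_eq_sum_mul_sub_min, ← add_sub_apply_min_eq_apply_max Φ]
  linarith [mul_sub_min_le_sub hφ (p m) x]

lemma sub_le_polygonalMinorant {Δ : ℝ} (hΔ : ∀ i, p (i + 1) ≤ p i + Δ) {m : ℕ} {x : ℝ}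
    (hxm : x ≤ p m) :
    Φ (max x (p 0)) - Δ * (φ x - φ (min x (p 0))) ≤ polygonalMinorant Φ φ p m x := by
  have hcell : ∀ i ∈ Finset.range m,
      Φ (min x (p (i + 1))) - Φ (min x (p i)) - Δ * (φ (min x (p (i + 1))) - φ (min x (p i))) ≤
        φ (p i) * (min x (p (i + 1)) - min x (p i)) := fun i _ => by
    linarith [sub_le_mul_sub_min_add hφ (hp i.le_succ) (hΔ i) x]
  have hsum := Finset.sum_le_sum hcell
  rw [Finset.sum_sub_distrib, ← Finset.mul_sum, Finset.sum_range_sub (fun i => Φ (min x (p i))),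
    Finset.sum_range_sub (fun i => φ (min x (p i))), min_eq_left hxm] at hsum
  rw [polygonalMinorant_eq_sum_mul_sub_min, min_eq_left hxm, sub_self, mul_zero, add_zero,
    ← add_sub_apply_min_eq_apply_max Φ]
  linarith

lemma le_polygonalMinorant (hΦ : Monotone Φ) (m : ℕ) (x : ℝ) :
    Φ (p 0) ≤ polygonalMinorant Φ φ p m x :=
  le_add_of_nonneg_right <| Finset.sum_nonneg fun i _ => mul_nonneg
    (hingeWeight_nonneg (monotone_of_forall_add_mul_sub_le hφ)
      (nonneg_of_forall_add_mul_sub_le hφ hΦ) hp i) (le_max_right _ _)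

end Minorant

lemma tendsto_polygonalMinorant {Φ φ : ℝ → ℝ} (hφ : ∀ x y, Φ x + φ x * (y - x) ≤ Φ y)
    (c x : ℝ) :
    Tendsto (fun n : ℕ => polygonalMinorant Φ φ (fun i => c + i / (n + 1)) ((n + 1) ^ 2) x)
      atTop (𝓝 (Φ (max x c))) := by
  have hp : ∀ n : ℕ, Monotone fun i : ℕ => c + i / ((n : ℝ) + 1) := fun n i j hij => by
    simp only
    gcongr
  have hlow : Tendsto (fun n : ℕ => Φ (max x c) - 1 / ((n : ℝ) + 1) * (φ x - φ (min x c)))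
      atTop (𝓝 (Φ (max x c))) := by
    simpa using tendsto_const_nhds.sub
      (tendsto_one_div_add_atTop_nhds_zero_nat.mul_const (φ x - φ (min x c)))
  obtain ⟨N, hN⟩ := exists_nat_ge (x - c)
  refine tendsto_of_tendsto_of_tendsto_of_le_of_le' hlow tendsto_const_nhds ?_
    (.of_forall fun n => by simpa using polygonalMinorant_le hφ (hp n) _ x)
  filter_upwards [eventually_ge_atTop N] with n hn
  have hmesh : ∀ i : ℕ, c + ((i + 1 : ℕ) : ℝ) / (n + 1) ≤ c + i / (n + 1) + 1 / (n + 1) :=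
    fun i => by push_cast; rw [add_div]; linarith
  have hxm : x ≤ c + (((n + 1) ^ 2 : ℕ) : ℝ) / (n + 1) := by
    have : (N : ℝ) ≤ n := by exact_mod_cast hn
    push_cast
    rw [sq, mul_div_cancel_right₀ _ (by positivity)]
    linarith
  simpa using sub_le_polygonalMinorant hφ (hp n) hmesh hxm

section HingeComparison

variable {α : Type*} [MeasurableSpace α] {μ : Measure α} [IsFiniteMeasure μ] {u v : α → ℝ}

lemma MeasureTheory.Integrable.hingeSum {ι : Type*} (hu : Integrable u μ) (c : ℝ)
    (t : Finset ι) (w p : ι → ℝ) :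
    Integrable (fun x => c + ∑ i ∈ t, w i * max (u x - p i) 0) μ :=
  (integrable_const c).add <| integrable_finsetSum t fun i _ =>
    ((hu.sub (integrable_const (p i))).pos_part).const_mul (w i)

lemma integral_hingeSum_le {ι : Type*} (hu : Integrable u μ) (hv : Integrable v μ)
    (huv : ∀ s, ∫ x, max (u x - s) 0 ∂μ ≤ ∫ x, max (v x - s) 0 ∂μ)
    (c : ℝ) (t : Finset ι) (w p : ι → ℝ) (hw : ∀ i ∈ t, 0 ≤ w i) :
    ∫ x, (c + ∑ i ∈ t, w i * max (u x - p i) 0) ∂μ ≤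
      ∫ x, (c + ∑ i ∈ t, w i * max (v x - p i) 0) ∂μ := by
  have hinge : ∀ {f : α → ℝ}, Integrable f μ → ∀ i, Integrable (fun x => max (f x - p i) 0) μ :=
    fun hf i => (hf.sub (integrable_const (p i))).pos_part
  rw [integral_add (integrable_const c) (integrable_finsetSum t fun i _ => (hinge hu i).const_mul _),
    integral_add (integrable_const c) (integrable_finsetSum t fun i _ => (hinge hv i).const_mul _),
    integral_finsetSum t fun i _ => (hinge hu i).const_mul _,
    integral_finsetSum t fun i _ => (hinge hv i).const_mul _]
  refine add_le_add le_rfl (Finset.sum_le_sum fun i hi => ?_)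
  rw [integral_const_mul, integral_const_mul]
  exact mul_le_mul_of_nonneg_left (huv (p i)) (hw i hi)

lemma MeasureTheory.Integrable.comp_max_const {Φ : ℝ → ℝ} (hΦ : Monotone Φ)
    (hΦu : Integrable (fun x => Φ (u x)) μ) (c : ℝ) :
    Integrable (fun x => Φ (max (u x) c)) μ :=
  (hΦu.sup (integrable_const (Φ c))).congr (.of_forall fun _ => hΦ.map_max.symm)

variable {Φ : ℝ → ℝ} (hΦ : Monotone Φ)
include hΦ

lemma integral_comp_max_le (hΦc : ConvexOn ℝ univ Φ) (hu : Integrable u μ)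
    (hv : Integrable v μ) (huv : ∀ s, ∫ x, max (u x - s) 0 ∂μ ≤ ∫ x, max (v x - s) 0 ∂μ)
    (hΦu : Integrable (fun x => Φ (u x)) μ) (hΦv : Integrable (fun x => Φ (v x)) μ) (c : ℝ) :
    ∫ x, Φ (max (u x) c) ∂μ ≤ ∫ x, Φ (max (v x) c) ∂μ := by
  set φ := fun x => derivWithin Φ (Ioi x) x
  have hφ : ∀ x y, Φ x + φ x * (y - x) ≤ Φ y := hΦc.add_rightDeriv_mul_sub_le
  set p : ℕ → ℕ → ℝ := fun n i => c + i / (n + 1)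
  set K : ℕ → ℝ → ℝ := fun n => polygonalMinorant Φ φ (p n) ((n + 1) ^ 2)
  have hp : ∀ n, Monotone (p n) := fun n i j hij => by simp only [p]; gcongr
  have hK_le : ∀ n x, K n x ≤ Φ (max x c) := fun n x => by
    simpa [p] using polygonalMinorant_le hφ (hp n) _ x
  have hK_ge : ∀ n x, Φ c ≤ K n x := fun n x => by
    simpa [p] using le_polygonalMinorant hφ (hp n) hΦ _ x
  have hK_int : ∀ n {w : α → ℝ}, Integrable w μ → Integrable (fun x => K n (w x)) μ :=
    fun n w hw => hw.hingeSum _ _ _ _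
  have hlim : Tendsto (fun n => ∫ x, K n (u x) ∂μ) atTop (𝓝 (∫ x, Φ (max (u x) c) ∂μ)) := by
    refine tendsto_integral_of_dominated_convergence (fun x => |Φ (max (u x) c)| + |Φ c|)
      (fun n => (hK_int n hu).aestronglyMeasurable)
      ((hΦu.comp_max_const hΦ c).abs.add (integrable_const _))
      (fun n => .of_forall fun x => ?_)
      (.of_forall fun x => tendsto_polygonalMinorant hφ c (u x))
    rw [Real.norm_eq_abs, abs_le]
    constructor <;> linarith [hK_le n (u x), hK_ge n (u x), le_abs_self (Φ (max (u x) c)),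
      neg_abs_le (Φ c), abs_nonneg (Φ c), abs_nonneg (Φ (max (u x) c))]
  refine le_of_tendsto' hlim fun n => ?_
  calc ∫ x, K n (u x) ∂μ ≤ ∫ x, K n (v x) ∂μ :=
        integral_hingeSum_le hu hv huv _ _ _ _ fun i _ =>
          hingeWeight_nonneg (monotone_of_forall_add_mul_sub_le hφ)
            (nonneg_of_forall_add_mul_sub_le hφ hΦ) (hp n) i
    _ ≤ ∫ x, Φ (max (v x) c) ∂μ :=
        integral_mono (hK_int n hv) (hΦv.comp_max_const hΦ c) fun x => hK_le n (v x)

lemma tendsto_integral_comp_max_atBot (hΦv : Integrable (fun x => Φ (v x)) μ) :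
    Tendsto (fun c => ∫ x, Φ (max (v x) c) ∂μ) atBot (𝓝 (∫ x, Φ (v x) ∂μ)) := by
  refine tendsto_integral_filter_of_dominated_convergence (fun x => |Φ (v x)| + |Φ 0|)
    (.of_forall fun c => (hΦv.comp_max_const hΦ c).aestronglyMeasurable)
    ?_ (hΦv.abs.add (integrable_const _)) (.of_forall fun x => ?_)
  · filter_upwards [eventually_le_atBot 0] with c hc
    refine .of_forall fun x => ?_
    rw [Real.norm_eq_abs, hΦ.map_max, abs_le]
    have := hΦ hc
    constructor
    · linarith [le_max_left (Φ (v x)) (Φ c), neg_abs_le (Φ (v x)), abs_nonneg (Φ 0)]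
    · rcases le_total (Φ (v x)) (Φ c) with h | h <;> simp only [h, max_eq_left, max_eq_right] <;>
        linarith [le_abs_self (Φ (v x)), le_abs_self (Φ 0), abs_nonneg (Φ (v x)), abs_nonneg (Φ 0)]
  · refine tendsto_const_nhds.congr' ?_
    filter_upwards [eventually_le_atBot (v x)] with c hc
    rw [max_eq_left hc]

end HingeComparison

section PosPart

variable {α : Type*} [MeasurableSpace α] {μ : Measure α} [IsFiniteMeasure μ] {v : α → ℝ}

lemma setIntegral_sub_le_integral_posPart (hv : Integrable v μ) (E : Set α) (s : ℝ) :
    ∫ t in E, v t ∂μ - s * μ.real E ≤ ∫ t, max (v t - s) 0 ∂μ := by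
  have hpos : Integrable (fun t => max (v t - s) 0) μ := (hv.sub (integrable_const s)).pos_part
  calc ∫ t in E, v t ∂μ - s * μ.real E = ∫ t in E, (v t - s) ∂μ := by
        rw [integral_sub hv.integrableOn (integrableOn_const (measure_ne_top μ E)),
          setIntegral_const, smul_eq_mul, mul_comm]
    _ ≤ ∫ t in E, max (v t - s) 0 ∂μ :=
        integral_mono (hv.integrableOn.sub (integrableOn_const (measure_ne_top μ E)))
          hpos.integrableOn fun t => le_max_left _ _
    _ ≤ ∫ t, max (v t - s) 0 ∂μ :=
        setIntegral_le_integral hpos (.of_forall fun t => le_max_right _ _)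

lemma exists_setIntegral_sub_eq_integral_posPart (hv : Integrable v μ) (s : ℝ) :
    ∃ E, MeasurableSet E ∧ ∫ t in E, v t ∂μ - s * μ.real E = ∫ t, max (v t - s) 0 ∂μ := by
  set E := {t | s < hv.1.mk v t}
  have hE : MeasurableSet E := hv.1.stronglyMeasurable_mk.measurable measurableSet_Ioi
  refine ⟨E, hE, ?_⟩
  have hpos : (fun t => max (v t - s) 0) =ᵐ[μ] E.indicator fun t => v t - s := by
    filter_upwards [hv.1.ae_eq_mk] with t ht
    by_cases hts : s < hv.1.mk v t
    · rw [indicator_of_mem (show t ∈ E from hts), max_eq_left (sub_pos.2 (ht ▸ hts)).le]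
    · rw [indicator_of_notMem (show t ∉ E from hts),
        max_eq_right (sub_nonpos.2 (not_lt.1 (ht ▸ hts)))]
  rw [integral_congr_ae hpos, integral_indicator hE,
    integral_sub hv.integrableOn (integrableOn_const (measure_ne_top μ E)),
    setIntegral_const, smul_eq_mul, mul_comm]

end PosPart

lemma setIntegral_sub_le_integral_Icc_posPart {v : ℝ → ℝ} (hv : IntegrableOn v (Icc (-π) π))
    {E : Set ℝ} (hE : MeasurableSet E) (hEI : E ⊆ Icc (-π) π) (s : ℝ) :
    (∫ t in E, v t) - s * volume.real E ≤ ∫ t in Icc (-π) π, max (v t - s) 0 := by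
  have := setIntegral_sub_le_integral_posPart (μ := volume.restrict (Icc (-π) π)) hv E s
  rwa [Measure.restrict_restrict_of_subset hEI, measureReal_restrict_apply hE,
    inter_eq_left.2 hEI] at this

lemma setIntegral_le_starFn {g : ℝ → ℝ} (hg : IntegrableOn g (Icc (-π) π)) {θ : ℝ} {E : Set ℝ}
    (hE : MeasurableSet E) (hEI : E ⊆ Icc (-π) π) (hvol : volume E = ENNReal.ofReal (2 * θ)) :
    ∫ t in E, g t ≤ starFn g θ := by
  refine le_csSup ⟨∫ t in Icc (-π) π, max (g t - 0) 0, ?_⟩ ⟨E, ⟨hE, hEI, hvol⟩, rfl⟩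
  rintro _ ⟨F, ⟨hF, hFI, -⟩, rfl⟩
  simpa using setIntegral_sub_le_integral_Icc_posPart hg hF hFI 0

lemma starFn_sub_le_integral_posPart {v : ℝ → ℝ} (hv : IntegrableOn v (Icc (-π) π)) {θ : ℝ}
    (hθ : θ ∈ Icc 0 π) (s : ℝ) :
    starFn v θ - s * (2 * θ) ≤ ∫ t in Icc (-π) π, max (v t - s) 0 := by
  rw [sub_le_iff_le_add]
  refine csSup_le (image_nonempty.2 ⟨Icc (-π) (-π + 2 * θ), measurableSet_Icc,
    Icc_subset_Icc le_rfl (by linarith [hθ.2]), by rw [Real.volume_Icc]; ring_nf⟩) ?_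
  rintro _ ⟨E, ⟨hE, hEI, hvol⟩, rfl⟩
  have hθE : volume.real E = 2 * θ := by
    rw [measureReal_def, hvol, ENNReal.toReal_ofReal (by linarith [hθ.1])]
  have := setIntegral_sub_le_integral_Icc_posPart hv hE hEI s
  rw [hθE] at this
  linarith

lemma integral_posPart_sub_le_of_starFn_le {u v : ℝ → ℝ} (hu : IntegrableOn u (Icc (-π) π))
    (hv : IntegrableOn v (Icc (-π) π)) (hstar : ∀ θ ∈ Icc (0 : ℝ) π, starFn u θ ≤ starFn v θ)
    (s : ℝ) :
    ∫ t in Icc (-π) π, max (u t - s) 0 ≤ ∫ t in Icc (-π) π, max (v t - s) 0 := by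
  obtain ⟨E, hE, hEu⟩ :=
    exists_setIntegral_sub_eq_integral_posPart (μ := volume.restrict (Icc (-π) π)) hu s
  rw [Measure.restrict_restrict hE, measureReal_restrict_apply hE] at hEu
  set F := E ∩ Icc (-π) π
  have hFI : F ⊆ Icc (-π) π := inter_subset_right
  have hF : volume F ≠ ⊤ := ((measure_mono hFI).trans_lt measure_Icc_lt_top).ne
  have hθ : volume.real F / 2 ∈ Icc 0 π := by
    have := measureReal_mono (μ := volume) hFI measure_Icc_lt_top.ne
    rw [Real.volume_real_Icc_of_le (by linarith [Real.pi_pos])] at this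
    constructor <;> linarith [measureReal_nonneg (μ := volume) (s := F)]
  have hvol : volume F = ENNReal.ofReal (2 * (volume.real F / 2)) := by
    rw [mul_div_cancel₀ _ two_ne_zero, ofReal_measureReal hF]
  have hFu := setIntegral_le_starFn hu (hE.inter measurableSet_Icc) hFI hvol
  have hFv := starFn_sub_le_integral_posPart hv hθ s
  rw [mul_div_cancel₀ _ two_ne_zero] at hFv
  linarith [hstar _ hθ]

/-- Let `u, v : [-π,π] → ℝ` be integrable with `u*(θ) ≤ v*(θ)`
for all `θ ∈ [0,π]`.  Then for every convex increasing `Φ : ℝ → ℝ` (such that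
the compositions are integrable, so that the integrals make sense),
`∫_{-π}^{π} Φ(u(t)) dt ≤ ∫_{-π}^{π} Φ(v(t)) dt`. -/
theorem convex_means_of_star_le
    (u v : ℝ → ℝ)
    (hu : IntegrableOn u (Icc (-π) π)) (hv : IntegrableOn v (Icc (-π) π))
    (hstar : ∀ θ ∈ Icc (0:ℝ) π, starFn u θ ≤ starFn v θ)
    (Φ : ℝ → ℝ) (hΦconv : ConvexOn ℝ univ Φ) (hΦmono : Monotone Φ)
    (hΦu : IntegrableOn (fun t => Φ (u t)) (Icc (-π) π))
    (hΦv : IntegrableOn (fun t => Φ (v t)) (Icc (-π) π)) :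
    (∫ t in (-π)..π, Φ (u t)) ≤ ∫ t in (-π)..π, Φ (v t) := by
  rw [intervalIntegral.integral_of_le (by linarith [Real.pi_pos]),
    intervalIntegral.integral_of_le (by linarith [Real.pi_pos]),
    ← integral_Icc_eq_integral_Ioc, ← integral_Icc_eq_integral_Ioc]
  have hinge := integral_posPart_sub_le_of_starFn_le hu hv hstar
  refine ge_of_tendsto (tendsto_integral_comp_max_atBot hΦmono hΦv) (.of_forall fun c => ?_)
  calc ∫ t in Icc (-π) π, Φ (u t) ≤ ∫ t in Icc (-π) π, Φ (max (u t) c) :=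
        integral_mono hΦu (hΦu.comp_max_const hΦmono c) fun t => hΦmono (le_max_left _ _)
    _ ≤ ∫ t in Icc (-π) π, Φ (max (v t) c) :=
        integral_comp_max_le hΦmono hΦconv hu hv hinge hΦu hΦv c
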